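/- Let Q be the simplicial set Δ^0 ⊔_{Δ^{\{0,2\}}} Δ^3 ⊔_{Δ^{\{1,3\}}} Δ^0, obtained from Δ^3 by collapsing the edge from 0 to 2 and the edge from 1 to 3 each to a point. Then the homotopy category τ(Q) of Q (the left adjoint of the nerve applied to Q) is a groupoid; equivalently, for every small category C and every map of simplicial sets Q → N(C), every 1-simplex of Q is sent to an isomorphism of C. -/

import Mathlib

open CategoryTheory Simplicial SSet Limits

/-- The map `Δ[1] ⟶ Δ[0]`. -/
noncomputable def collapseMap : (Δ[1] : SSet) ⟶ Δ[0] :=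
  SSet.stdSimplex.map (SimplexCategory.mkOfLe (0 : Fin 1) 0 le_rfl)

/-- The edge of `Δ[3]` from `0` to `2`. -/
noncomputable def edge02 : (Δ[1] : SSet) ⟶ Δ[3] :=
  SSet.stdSimplex.map (SimplexCategory.mkOfLe (0 : Fin 4) 2 (by decide))

/-- The edge of `Δ[3]` from `1` to `3`. -/
noncomputable def edge13 : (Δ[1] : SSet) ⟶ Δ[3] :=
  SSet.stdSimplex.map (SimplexCategory.mkOfLe (1 : Fin 4) 3 (by decide))

/-- The simplicial set `Q = Δ⁰ ⊔_{Δ^{0,2}} Δ³ ⊔_{Δ^{1,3}} Δ⁰`, obtained from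
`Δ³` by collapsing the edge from `0` to `2` and the edge from `1` to `3` each
to a point. -/
noncomputable def Q : SSet :=
  pushout (coprod.desc edge02 edge13) (coprod.map collapseMap collapseMap)

/-! For `F : Q ⟶ N(C)`, the composite `Δ³ ⟶ Q ⟶ N(C)` is a string of three composable
arrows `g₁, g₂, g₃` of `C` in which `g₁ ≫ g₂` and `g₂ ≫ g₃` are identities, since the edges
`0 ⟶ 2` and `1 ⟶ 3` are collapsed in `Q`. By two-out-of-six `g₂` is invertible, hence so are
`g₁` and `g₃`, and with them every arrow of the string. As `Δ³ ⟶ Q` is an epimorphism, every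
simplex of `Q` comes from `Δ³`, so `F` sends it to a string of isomorphisms. -/

universe u

lemma CategoryTheory.isIso_of_isIso_comp_of_isIso_comp {𝒞 : Type*} [Category 𝒞]
    {W X Y Z : 𝒞} {f : W ⟶ X} {g : X ⟶ Y} {h : Y ⟶ Z} (hfg : IsIso (f ≫ g))
    (hgh : IsIso (g ≫ h)) : IsIso g := by
  have : IsSplitEpi g := IsSplitEpi.mk' ⟨inv (f ≫ g) ≫ f, by simp⟩
  have : IsSplitMono g :=
    IsSplitMono.mk' ⟨h ≫ inv (g ≫ h), by rw [← Category.assoc, IsIso.hom_inv_id]⟩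
  exact isIso_of_mono_of_isSplitEpi g

lemma CategoryTheory.ComposableArrows.isIso_map_of_isIso_map'_succ {C : Type*} [Category C]
    {n : ℕ} (S : ComposableArrows C n) (hS : ∀ (i : ℕ) (hi : i < n), IsIso (S.map' i (i + 1)))
    {a b : Fin (n + 1)} (φ : a ⟶ b) : IsIso (S.map φ) := by
  have hS' : ∀ j i (hij : i ≤ j) (hj : j ≤ n), IsIso (S.map' i j) := by
    intro j
    induction j with
    | zero =>
      intro i hi hj
      obtain rfl : i = 0 := by omega
      rw [S.map'_self 0]
      infer_instance
    | succ j ih =>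
      intro i hij hj
      obtain rfl | hij := eq_or_lt_of_le hij
      · rw [S.map'_self _ hj]
        infer_instance
      · have := ih i (by omega) (by omega)
        have := hS j (by omega)
        rw [S.map'_comp i j (j + 1)]
        infer_instance
  have hφ : S.map φ = S.map' a b (leOfHom φ) (by omega) :=
    congrArg S.map (Subsingleton.elim _ _)
  rw [hφ]
  exact hS' _ _ _ _

section

variable (C : Type u) [SmallCategory C]

/-- The nerve of the core groupoid of `C`, as a subcomplex of `N(C)`. -/
def nerveCore : (nerve C).Subcomplex where
  obj _ := {S | ∀ ⦃a b⦄ (φ : a ⟶ b), IsIso (S.map φ)}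
  map _ _ hS _ _ _ := hS _

variable {C}

lemma mem_nerveCore_zero (x : ComposableArrows C 0) :
    x ∈ (nerveCore C).obj (Opposite.op ⦋0⦌) := by
  intro a b φ
  obtain rfl : a = b := Subsingleton.elim (α := Fin 1) _ _
  obtain rfl : φ = 𝟙 a := Subsingleton.elim _ _
  rw [x.map_id]
  infer_instance

lemma range_le_nerveCore_of_stdSimplex_zero (G : Δ[0] ⟶ nerve C) :
    Subcomplex.range G ≤ nerveCore C := by
  rw [Subcomplex.range_eq_ofSimplex, Subcomplex.ofSimplex_le_iff]
  exact mem_nerveCore_zero _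

lemma mem_nerveCore_of_isIso_map'_zero_two_of_isIso_map'_one_three
    (S : ComposableArrows C 3) (h02 : IsIso (S.map' 0 2)) (h13 : IsIso (S.map' 1 3)) :
    S ∈ (nerveCore C).obj (Opposite.op ⦋3⦌) := by
  rw [S.map'_comp 0 1 2] at h02
  rw [S.map'_comp 1 2 3] at h13
  have := isIso_of_isIso_comp_of_isIso_comp h02 h13
  have := (isIso_comp_right_iff _ _).mp h02
  have := (isIso_comp_left_iff _ _).mp h13
  exact fun _ _ ↦ S.isIso_map_of_isIso_map'_succ (by intro i hi; interval_cases i <;> assumption)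

lemma isIso_map'_of_stdSimplex_map_comp_eq {n : ℕ} (G : Δ[n] ⟶ nerve C) (i j : Fin (n + 1))
    (hij : i ≤ j) (p : Δ[1] ⟶ Δ[0]) (H : Δ[0] ⟶ nerve C)
    (h : SSet.stdSimplex.map (SimplexCategory.mkOfLe i j hij) ≫ G = p ≫ H) :
    IsIso (ComposableArrows.map' (n := n) (yonedaEquiv G) i j) := by
  have : yonedaEquiv (p ≫ H) ∈ (nerveCore C).obj _ :=
    range_le_nerveCore_of_stdSimplex_zero H _ ⟨yonedaEquiv p, rfl⟩
  rw [← h, ← SSet.yonedaEquiv_naturality] at this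
  exact this (homOfLE (by decide : (0 : Fin 2) ≤ 1))

end

instance : IsSplitEpi collapseMap :=
  IsSplitEpi.mk' ⟨SSet.stdSimplex.map (SimplexCategory.const _ _ 0), by
    rw [collapseMap, ← SSet.stdSimplex.map_comp, Subsingleton.elim (_ ≫ _) (𝟙 _)]
    exact SSet.stdSimplex.map_id _⟩

noncomputable def Q.π : (Δ[3] : SSet) ⟶ Q := pushout.inl _ _

noncomputable def Q.vertex02 : (Δ[0] : SSet) ⟶ Q := coprod.inl ≫ pushout.inr _ _

noncomputable def Q.vertex13 : (Δ[0] : SSet) ⟶ Q := coprod.inr ≫ pushout.inr _ _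

instance : Epi Q.π := pushout.inl_of_epi

lemma edge02_comp_π : edge02 ≫ Q.π = collapseMap ≫ Q.vertex02 := by
  have := coprod.inl ≫= (pushout.condition : coprod.desc edge02 edge13 ≫ Q.π = _)
  simp only [coprod.inl_desc_assoc, coprod.inl_map_assoc] at this
  exact this

lemma edge13_comp_π : edge13 ≫ Q.π = collapseMap ≫ Q.vertex13 := by
  have := coprod.inr ≫= (pushout.condition : coprod.desc edge02 edge13 ≫ Q.π = _)
  simp only [coprod.inr_desc_assoc, coprod.inr_map_assoc] at this
  exact this

/-- The homotopy category of `Q` is a groupoid: for every small category `C`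
and every simplicial map `Q ⟶ N(C)`, every 1-simplex of `Q` is sent to an
isomorphism of `C`. -/
theorem statement8 (C : Type) [SmallCategory C] (F : Q ⟶ nerve C)
    (q : Q.obj (Opposite.op (SimplexCategory.mk 1))) :
    IsIso ((F.app (Opposite.op (SimplexCategory.mk 1)) q).map' 0 1
      (by omega) (by exact le_rfl)) := by
  have h02 := isIso_map'_of_stdSimplex_map_comp_eq (Q.π ≫ F) 0 2 (by decide) collapseMap
    (Q.vertex02 ≫ F) (by simpa only [Category.assoc, edge02] using edge02_comp_π =≫ F)
  have h13 := isIso_map'_of_stdSimplex_map_comp_eq (Q.π ≫ F) 1 3 (by decide) collapseMap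
    (Q.vertex13 ≫ F) (by simpa only [Category.assoc, edge13] using edge13_comp_π =≫ F)
  have hπF : Subcomplex.range (Q.π ≫ F) ≤ nerveCore C := by
    rw [Subcomplex.range_eq_ofSimplex, Subcomplex.ofSimplex_le_iff]
    exact mem_nerveCore_of_isIso_map'_zero_two_of_isIso_map'_one_three _ h02 h13
  obtain ⟨x, rfl⟩ := (epi_iff_surjective (Q.π.app _)).mp inferInstance q
  exact hπF _ ⟨x, rfl⟩ (homOfLE (by decide : (0 : Fin 2) ≤ 1))
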